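/- arXiv:1710.04643 — 4 statements merged into one kernel-verified Lean document; each statement's English description precedes it below -/
import Mathlib

section
/- For jointly distributed finite random variables (X_l)_{l∈L} and X_0 satisfying the Markov chain X_S − X_0 − X_T for all disjoint S,T ⊆ L, the set function v(S) = I(X_S; X_0 | X_{S^c}) (where S^c = L\S) satisfies v(S) = H(X_L) − H(X_{S^c}) − H(X_S | X_0) for every S ⊆ L. -/
noncomputable section
open Finset
open scoped Classical BigOperators

/-- Probability of an event under a pmf on a finite sample space. -/
def Pr {Ω : Type} [Fintype Ω] (p : Ω → ℝ) (E : Ω → Prop) : ℝ :=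
  ∑ ω : Ω, if E ω then p ω else 0

/-- `p` is a probability mass function. -/
def IsPMF {Ω : Type} [Fintype Ω] (p : Ω → ℝ) : Prop :=
  (∀ ω, 0 ≤ p ω) ∧ (∑ ω : Ω, p ω) = 1

/-- Shannon entropy of a finitely-valued random variable `X` under pmf `p`. -/
def ent {Ω α : Type} [Fintype Ω] [Fintype α] (p : Ω → ℝ) (X : Ω → α) : ℝ :=
  -∑ a : α, Pr p (fun ω => X ω = a) * Real.log (Pr p (fun ω => X ω = a))

/-- Conditional Shannon entropy `H(X|Y)`. -/
def condEnt {Ω α β : Type} [Fintype Ω] [Fintype α] [Fintype β]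
    (p : Ω → ℝ) (X : Ω → α) (Y : Ω → β) : ℝ :=
  ent p (fun ω => (X ω, Y ω)) - ent p Y

/-- Mutual information `I(X;Y)`. -/
def mi {Ω α β : Type} [Fintype Ω] [Fintype α] [Fintype β]
    (p : Ω → ℝ) (X : Ω → α) (Y : Ω → β) : ℝ :=
  ent p X + ent p Y - ent p (fun ω => (X ω, Y ω))

/-- Conditional mutual information `I(X;Y|Z)`. -/
def cmi {Ω α β γ : Type} [Fintype Ω] [Fintype α] [Fintype β] [Fintype γ]
    (p : Ω → ℝ) (X : Ω → α) (Y : Ω → β) (Z : Ω → γ) : ℝ :=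
  ent p (fun ω => (X ω, Z ω)) + ent p (fun ω => (Y ω, Z ω))
    - ent p (fun ω => (X ω, Y ω, Z ω)) - ent p Z

/-- `X` and `Y` are conditionally independent given `Z` (Markov chain `X - Z - Y`). -/
def CondIndep {Ω α β γ : Type} [Fintype Ω] [Fintype α] [Fintype β] [Fintype γ]
    (p : Ω → ℝ) (X : Ω → α) (Y : Ω → β) (Z : Ω → γ) : Prop :=
  ∀ (a : α) (b : β) (c : γ),
    Pr p (fun ω => X ω = a ∧ Y ω = b ∧ Z ω = c) * Pr p (fun ω => Z ω = c)
      = Pr p (fun ω => X ω = a ∧ Z ω = c) * Pr p (fun ω => Y ω = b ∧ Z ω = c)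

/-- The tuple random variable `X_S = (X_l)_{l ∈ S}`. -/
def XS {Ω L 𝒳 : Type} [Fintype Ω] (X : L → Ω → 𝒳) (S : Finset L) :
    Ω → (S → 𝒳) :=
  fun ω i => X i ω

/-- The value function of the secret-key generation game:
`v(S) = I(X_S; X_0 | X_{L\S})`. -/
def vGame {Ω L 𝒳 β : Type} [Fintype Ω] [Fintype L] [DecidableEq L] [Fintype 𝒳] [Fintype β]
    (p : Ω → ℝ) (X : L → Ω → 𝒳) (X0 : Ω → β) (S : Finset L) : ℝ :=
  cmi p (XS X S) X0 (XS X Sᶜ)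

/-!
Writing entropy as an expectation, `H(X) = -∑ ω, p ω * log P(X = X ω)`, the Markov condition
`X_S - X_0 - X_{S^c}` makes
`log P(x_S, x_{S^c}, x_0) = log P(x_S, x_0) + log P(x_{S^c}, x_0) - log P(x_0)`
on the support of `p`, hence `H(X_S, X_{S^c}, X_0) = H(X_S, X_0) + H(X_{S^c}, X_0) - H(X_0)`.
Substituting this into `I(X_S; X_0 | X_{S^c})`, and using that `(X_S, X_{S^c})` carries the same
information as `X_L`, gives the formula.
-/

section Probability

variable {Ω : Type} [Fintype Ω]

lemma Pr_congr (p : Ω → ℝ) {E F : Ω → Prop} (h : ∀ ω, E ω ↔ F ω) : Pr p E = Pr p F := by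
  simp only [Pr, h]

lemma le_Pr_of_holds {p : Ω → ℝ} (hp : ∀ ω, 0 ≤ p ω) {E : Ω → Prop} {ω : Ω} (hω : E ω) :
    p ω ≤ Pr p E := by
  have hterm : ∀ ω' ∈ univ, 0 ≤ if E ω' then p ω' else 0 := fun ω' _ => by
    split_ifs
    exacts [hp ω', le_rfl]
  simpa [Pr, hω] using single_le_sum hterm (mem_univ ω)

lemma ent_eq_neg_sum_mul_log_Pr {α : Type} [Fintype α] (p : Ω → ℝ) (X : Ω → α) :
    ent p X = -∑ ω, p ω * Real.log (Pr p fun ω' => X ω' = X ω) := by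
  unfold ent
  congr 1
  simp only [Pr, sum_mul, ite_mul, zero_mul]
  rw [sum_comm]
  simp

lemma ent_congr {α β : Type} [Fintype α] [Fintype β] (p : Ω → ℝ) {X : Ω → α} {Y : Ω → β}
    (h : ∀ ω ω', X ω' = X ω ↔ Y ω' = Y ω) : ent p X = ent p Y := by
  simp only [ent_eq_neg_sum_mul_log_Pr, Pr_congr p (h _)]

end Probability

section CondIndep

variable {Ω α β γ : Type} [Fintype Ω] [Fintype α] [Fintype β] [Fintype γ] {p : Ω → ℝ}
  {X : Ω → α} {Y : Ω → β} {Z : Ω → γ}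

lemma CondIndep.log_Pr_eq (h : CondIndep p X Y Z) (hp : ∀ ω, 0 ≤ p ω) {ω : Ω} (hω : 0 < p ω) :
    Real.log (Pr p fun ω' => (X ω', Y ω', Z ω') = (X ω, Y ω, Z ω))
      = Real.log (Pr p fun ω' => (X ω', Z ω') = (X ω, Z ω))
        + Real.log (Pr p fun ω' => (Y ω', Z ω') = (Y ω, Z ω))
        - Real.log (Pr p fun ω' => Z ω' = Z ω) := by
  have hpos : ∀ E : Ω → Prop, E ω → 0 < Pr p E := fun E hE =>
    hω.trans_le (le_Pr_of_holds hp hE)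
  have hXYZ := hpos (fun ω' => X ω' = X ω ∧ Y ω' = Y ω ∧ Z ω' = Z ω) ⟨rfl, rfl, rfl⟩
  have hXZ := hpos (fun ω' => X ω' = X ω ∧ Z ω' = Z ω) ⟨rfl, rfl⟩
  have hYZ := hpos (fun ω' => Y ω' = Y ω ∧ Z ω' = Z ω) ⟨rfl, rfl⟩
  have hZ := hpos (fun ω' => Z ω' = Z ω) rfl
  simp only [Prod.ext_iff]
  rw [← Real.log_mul hXZ.ne' hYZ.ne', ← h, Real.log_mul hXYZ.ne' hZ.ne']
  ring

lemma ent_prod_eq_of_condIndep (h : CondIndep p X Y Z) (hp : ∀ ω, 0 ≤ p ω) :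
    ent p (fun ω => (X ω, Y ω, Z ω))
      = ent p (fun ω => (X ω, Z ω)) + ent p (fun ω => (Y ω, Z ω)) - ent p Z := by
  simp only [ent_eq_neg_sum_mul_log_Pr, ← sum_neg_distrib, ← sum_add_distrib, ← sum_sub_distrib]
  refine sum_congr rfl fun ω _ => ?_
  rcases (hp ω).eq_or_lt with h0 | h0
  · simp [← h0]
  · rw [h.log_Pr_eq hp h0]
    ring

end CondIndep

lemma XS_eq_XS_iff {Ω L 𝒳 : Type} [Fintype Ω] {X : L → Ω → 𝒳} {T : Finset L} {ω ω' : Ω} :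
    XS X T ω = XS X T ω' ↔ ∀ i ∈ T, X i ω = X i ω' := by
  simp [XS, funext_iff]

lemma ent_XS_prod_XS_compl {Ω L 𝒳 : Type} [Fintype Ω] [Fintype L] [DecidableEq L] [Fintype 𝒳]
    (p : Ω → ℝ) (X : L → Ω → 𝒳) (S : Finset L) :
    ent p (fun ω => (XS X S ω, XS X Sᶜ ω)) = ent p (XS X univ) :=
  ent_congr p fun ω ω' => by
    simp only [Prod.ext_iff, XS_eq_XS_iff, mem_compl, mem_univ, forall_const]
    exact ⟨fun h i => (em (i ∈ S)).elim (h.1 i) (h.2 i), fun h => ⟨fun i _ => h i, fun i _ => h i⟩⟩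

/-- under the Markov chain assumption,
`v(S) = I(X_S; X_0 | X_{S^c}) = H(X_L) - H(X_{S^c}) - H(X_S | X_0)`. -/
theorem statement0 {Ω L 𝒳 β : Type} [Fintype Ω] [Fintype L] [DecidableEq L] [Fintype 𝒳] [Fintype β]
    (p : Ω → ℝ) (hp : IsPMF p) (X : L → Ω → 𝒳) (X0 : Ω → β)
    (hM : ∀ S T : Finset L, Disjoint S T → CondIndep p (XS X S) (XS X T) X0)
    (S : Finset L) :
    vGame p X X0 S
      = ent p (XS X (Finset.univ : Finset L)) - ent p (XS X Sᶜ) - condEnt p (XS X S) X0 := by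
  have hsplit := ent_prod_eq_of_condIndep (hM S Sᶜ disjoint_compl_right) hp.1
  have hswap : ent p (fun ω => (X0 ω, XS X Sᶜ ω)) = ent p (fun ω => (XS X Sᶜ ω, X0 ω)) :=
    ent_congr p fun ω ω' => by simp only [Prod.ext_iff, and_comm]
  have hperm : ent p (fun ω => (XS X S ω, X0 ω, XS X Sᶜ ω))
      = ent p (fun ω => (XS X S ω, XS X Sᶜ ω, X0 ω)) :=
    ent_congr p fun ω ω' => by simp only [Prod.ext_iff, and_comm]
  unfold vGame cmi condEnt
  linarith [ent_XS_prod_XS_compl p X S]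
end
end

section
/- (Leftover hash lemma for concatenated hash functions, unconditioned version) Let X_L = (X_l)_{l∈L} be random variables taking values in finite sets, and for each l let F_l be uniformly and independently chosen from a family 𝓕_l of two-universal hash functions from X_l's alphabet to {0,1}^{r_l}. Then the collision probability satisfies P[(F_L(X_L), F_L) = (F'_L(X'_L), F'_L)] ≤ s_L^{-1} Σ_{S ⊆ L} 2^{−r_S − H_∞(X_{S^c})}, where (X'_L, F'_L) is an independent copy, s_L = Π_l |𝓕_l|, r_S = Σ_{i∈S} r_i, and F_L(X_L) is the concatenation of the F_l(X_l). -/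
noncomputable section
open Finset
open scoped Classical BigOperators

/-- Marginal pmf of `q` over the coordinates in `T`. -/
def marg {L : Type} [Fintype L] [DecidableEq L] {𝒳 : L → Type} [∀ l, Fintype (𝒳 l)]
    (q : (∀ l, 𝒳 l) → ℝ) (T : Finset L) (a : ∀ i : T, 𝒳 i.1) : ℝ :=
  ∑ x : ∀ l, 𝒳 l, if (∀ i : T, x i.1 = a i) then q x else 0

/-- Min-entropy (base 2) of the marginal of `q` on the coordinates in `T`:
`H_∞(X_T) = -log₂ max_a P[X_T = a]`. -/
def minEnt {L : Type} [Fintype L] [DecidableEq L] {𝒳 : L → Type} [∀ l, Fintype (𝒳 l)]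
    (q : (∀ l, 𝒳 l) → ℝ) (T : Finset L) : ℝ :=
  - Real.logb 2 (⨆ a : ∀ i : T, 𝒳 i.1, marg q T a)

/-- The family `(f l i)_{i : ι l}` is a two-universal family of hash functions into
`{0,1}^{r l}`, under the uniform choice of the index. -/
def TwoUniversal {L : Type} {𝒳 ι : L → Type} [∀ l, Fintype (ι l)]
    (r : L → ℕ) (f : ∀ l, ι l → 𝒳 l → (Fin (r l) → Bool)) : Prop :=
  ∀ l, ∀ x x' : 𝒳 l, x ≠ x' →
    ((Finset.univ.filter (fun i : ι l => f l i x = f l i x')).card : ℝ)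
        / (Fintype.card (ι l) : ℝ)
      ≤ ((2 : ℝ) ^ (r l))⁻¹


/-!
Averaging over the shared seed `g = g'` factorises the collision probability over the
coordinates: for fixed inputs `x, x'` the fraction of seeds `i` with
`f l i (x l) = f l i (x' l)` is `1` where `x l = x' l` and at most `2^{-r l}` where they
differ. Pairs `(x, x')` differing exactly on `S` agree on `Sᶜ`, and two independent copies
of `X` agree on `Sᶜ` with probability at most `max_a P[X_{Sᶜ} = a] = 2^{-H_∞(X_{Sᶜ})}`.
-/

section Marginal

variable {L : Type} [Fintype L] [DecidableEq L] {𝒳 : L → Type} [∀ l, Fintype (𝒳 l)]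
  {q : (∀ l, 𝒳 l) → ℝ}

lemma sum_marg (hq : IsPMF q) (T : Finset L) : ∑ a, marg q T a = 1 := by
  unfold marg
  rw [Finset.sum_comm, ← hq.2]
  refine Finset.sum_congr rfl fun x _ => ?_
  simp only [← funext_iff, Finset.sum_ite_eq, Finset.mem_univ, if_true]

lemma marg_le_iSup_marg (T : Finset L) (a : ∀ i : T, 𝒳 i.1) :
    marg q T a ≤ ⨆ b, marg q T b :=
  le_ciSup (Set.finite_range _).bddAbove a

lemma iSup_marg_pos (hq : IsPMF q) (T : Finset L) : 0 < ⨆ a, marg q T a := by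
  by_contra! h
  have : (1 : ℝ) ≤ 0 := by
    rw [← sum_marg hq T]
    exact Finset.sum_nonpos fun a _ => (marg_le_iSup_marg T a).trans h
  linarith

lemma rpow_neg_minEnt (hq : IsPMF q) (T : Finset L) :
    (2 : ℝ) ^ (-minEnt q T) = ⨆ a, marg q T a := by
  rw [minEnt, neg_neg]
  exact Real.rpow_logb two_pos (by norm_num) (iSup_marg_pos hq T)

lemma rpow_neg_sum_sub_minEnt (hq : IsPMF q) (r : L → ℕ) (S : Finset L) :
    (2 : ℝ) ^ (-(∑ i ∈ S, (r i : ℝ)) - minEnt q Sᶜ)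
      = (∏ i ∈ S, ((2 : ℝ) ^ r i)⁻¹) * ⨆ a, marg q Sᶜ a := by
  rw [sub_eq_add_neg, Real.rpow_add two_pos, rpow_neg_minEnt hq, Real.rpow_neg zero_le_two,
    ← Nat.cast_sum, Real.rpow_natCast, ← Finset.prod_pow_eq_pow_sum, Finset.prod_inv_distrib]

lemma sum_sum_agreeOn_le_iSup_marg (hq : IsPMF q) (T : Finset L) :
    ∑ x, ∑ x', (if ∀ l ∈ T, x l = x' l then q x * q x' else 0) ≤ ⨆ a, marg q T a := by
  have inner : ∀ x, ∑ x', (if ∀ l ∈ T, x l = x' l then q x * q x' else 0)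
      = q x * marg q T (fun i => x i.1) := by
    intro x
    rw [marg, Finset.mul_sum]
    refine Finset.sum_congr rfl fun x' _ => ?_
    rw [mul_ite, mul_zero]
    exact if_congr ⟨fun h i => (h i.1 i.2).symm, fun h l hl => (h ⟨l, hl⟩).symm⟩ rfl rfl
  calc ∑ x, ∑ x', (if ∀ l ∈ T, x l = x' l then q x * q x' else 0)
      = ∑ x, q x * marg q T (fun i => x i.1) := Finset.sum_congr rfl fun x _ => inner x
    _ ≤ ∑ x, q x * ⨆ a, marg q T a := by
      gcongr with x
      · exact hq.1 x
      · exact marg_le_iSup_marg T _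
    _ = ⨆ a, marg q T a := by rw [← Finset.sum_mul, hq.2, one_mul]

end Marginal

section DiffSet

variable {L : Type} [Fintype L] [DecidableEq L] {𝒳 : L → Type}

def diffSet (x x' : ∀ l, 𝒳 l) : Finset L := {l | x l ≠ x' l}

lemma agreeOn_compl_of_diffSet_eq {x x' : ∀ l, 𝒳 l} {S : Finset L} (h : diffSet x x' = S) :
    ∀ l ∈ Sᶜ, x l = x' l := by
  intro l hl
  by_contra hne
  exact Finset.mem_compl.mp hl (h ▸ Finset.mem_filter.mpr ⟨Finset.mem_univ l, hne⟩)

variable [∀ l, Fintype (𝒳 l)]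

lemma sum_sum_mul_weight_diffSet_le {q : (∀ l, 𝒳 l) → ℝ} (hq : IsPMF q)
    (w : Finset L → ℝ) (hw : ∀ S, 0 ≤ w S) :
    ∑ x, ∑ x', q x * q x' * w (diffSet x x') ≤ ∑ S, w S * ⨆ a, marg q Sᶜ a := by
  calc ∑ x, ∑ x', q x * q x' * w (diffSet x x')
      = ∑ S, w S * ∑ x, ∑ x', (if diffSet x x' = S then q x * q x' else 0) := by
        simp only [Finset.mul_sum, mul_ite, mul_zero]
        conv_rhs => rw [Finset.sum_comm]; enter [2, x]; rw [Finset.sum_comm]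
        simp only [Finset.sum_ite_eq, Finset.mem_univ, if_true, mul_comm]
    _ ≤ ∑ S, w S * ∑ x, ∑ x', (if ∀ l ∈ Sᶜ, x l = x' l then q x * q x' else 0) := by
        gcongr with S _ x _ x' _
        · exact hw S
        · split_ifs with h h'
          · exact le_rfl
          · exact absurd (agreeOn_compl_of_diffSet_eq h) h'
          · exact mul_nonneg (hq.1 x) (hq.1 x')
          · exact le_rfl
    _ ≤ ∑ S, w S * ⨆ a, marg q Sᶜ a := by
        gcongr with S
        · exact hw S
        · exact sum_sum_agreeOn_le_iSup_marg hq Sᶜ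

end DiffSet

section Hashing

variable {L : Type} {𝒳 ι : L → Type} [∀ l, Fintype (ι l)]
  {r : L → ℕ} {f : ∀ l, ι l → 𝒳 l → (Fin (r l) → Bool)}

lemma card_collide_le (huniv : TwoUniversal r f) (l : L) (a b : 𝒳 l) :
    (#{i | f l i a = f l i b} : ℝ)
      ≤ Fintype.card (ι l) * if a = b then 1 else ((2 : ℝ) ^ r l)⁻¹ := by
  have hle : (#{i | f l i a = f l i b} : ℝ) ≤ Fintype.card (ι l) := by
    exact_mod_cast Finset.card_filter_le _ _
  split_ifs with hab
  · rwa [mul_one]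
  rcases (Fintype.card (ι l)).eq_zero_or_pos with h0 | hpos
  · simp only [h0, Nat.cast_zero] at hle ⊢
    linarith
  · exact (div_le_iff₀' (by exact_mod_cast hpos)).mp (huniv l a b hab)

variable [Fintype L]

lemma prod_card_collide_le (huniv : TwoUniversal r f) (x x' : ∀ l, 𝒳 l) :
    ∏ l, (#{i | f l i (x l) = f l i (x' l)} : ℝ)
      ≤ (∏ l, (Fintype.card (ι l) : ℝ)) * ∏ l ∈ diffSet x x', ((2 : ℝ) ^ r l)⁻¹ := by
  calc ∏ l, (#{i | f l i (x l) = f l i (x' l)} : ℝ)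
      ≤ ∏ l, (Fintype.card (ι l) * if x l = x' l then 1 else ((2 : ℝ) ^ r l)⁻¹) :=
        Finset.prod_le_prod (fun _ _ => Nat.cast_nonneg _)
          fun l _ => card_collide_le huniv l (x l) (x' l)
    _ = (∏ l, (Fintype.card (ι l) : ℝ)) * ∏ l ∈ diffSet x x', ((2 : ℝ) ^ r l)⁻¹ := by
        simp only [Finset.prod_mul_distrib, diffSet, Finset.prod_filter, ite_not]

variable [DecidableEq L]

lemma sum_sum_ite_eq_and_collide (x x' : ∀ l, 𝒳 l) :
    ∑ g : ∀ l, ι l, ∑ g' : ∀ l, ι l,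
        (if g = g' ∧ ∀ l, f l (g l) (x l) = f l (g' l) (x' l) then (1 : ℝ) else 0)
      = ∏ l, (#{i | f l i (x l) = f l i (x' l)} : ℝ) := by
  simp only [ite_and, Finset.sum_ite_eq, Finset.mem_univ, if_true, ← Fintype.prod_boole,
    ← Finset.sum_boole, Fintype.prod_sum]

end Hashing

theorem statement13_general {L : Type} [Fintype L] [DecidableEq L]
    {𝒳 : L → Type} [∀ l, Fintype (𝒳 l)] {ι : L → Type} [∀ l, Fintype (ι l)]
    (r : L → ℕ) (f : ∀ l, ι l → 𝒳 l → (Fin (r l) → Bool))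
    (huniv : TwoUniversal r f)
    (q : (∀ l, 𝒳 l) → ℝ) (hq : IsPMF q) :
    (∑ g : ∀ l, ι l, ∑ g' : ∀ l, ι l, ∑ x : ∀ l, 𝒳 l, ∑ x' : ∀ l, 𝒳 l,
        (∏ l, (Fintype.card (ι l) : ℝ))⁻¹ * (∏ l, (Fintype.card (ι l) : ℝ))⁻¹
          * q x * q x' *
          (if g = g' ∧ (∀ l, f l (g l) (x l) = f l (g' l) (x' l)) then (1 : ℝ) else 0))
      ≤ (∏ l, (Fintype.card (ι l) : ℝ))⁻¹ *
          ∑ S : Finset L, (2 : ℝ) ^ (-(∑ i ∈ S, (r i : ℝ)) - minEnt q Sᶜ) := by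
  set s := ∏ l, (Fintype.card (ι l) : ℝ)
  set w : Finset L → ℝ := fun S => ∏ l ∈ S, ((2 : ℝ) ^ r l)⁻¹
  calc _ = s⁻¹ * s⁻¹ *
        ∑ x, ∑ x', q x * q x' * ∏ l, (#{i | f l i (x l) = f l i (x' l)} : ℝ) := by
        simp_rw [Finset.sum_comm (s := (univ : Finset (∀ l, ι l)))
            (t := (univ : Finset (∀ l, 𝒳 l))),
          ← sum_sum_ite_eq_and_collide, Finset.mul_sum, mul_assoc]
    _ ≤ s⁻¹ * s⁻¹ * ∑ x, ∑ x', q x * q x' * (s * w (diffSet x x')) := by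
        gcongr with x _ x' _
        · exact mul_nonneg (hq.1 x) (hq.1 x')
        · exact prod_card_collide_le huniv x x'
    _ = s⁻¹ * ∑ x, ∑ x', q x * q x' * w (diffSet x x') := by
        simp only [mul_left_comm _ s, ← Finset.mul_sum]
        rcases eq_or_ne s 0 with hs | hs
        · simp [hs]
        · field_simp
    _ ≤ s⁻¹ * ∑ S, w S * ⨆ a, marg q Sᶜ a := by
        gcongr
        exact sum_sum_mul_weight_diffSet_le hq w fun S => by positivity
    _ = _ := by simp only [w, rpow_neg_sum_sub_minEnt hq]

/-- leftover hash lemma for concatenated hash functions, collision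
probability version:
`P[(F_L(X_L),F_L) = (F'_L(X'_L),F'_L)] ≤ s_L⁻¹ Σ_{S⊆L} 2^{-r_S - H_∞(X_{S^c})}`. -/
theorem statement13 {L : Type} [Fintype L] [DecidableEq L]
    {𝒳 : L → Type} [∀ l, Fintype (𝒳 l)] {ι : L → Type} [∀ l, Fintype (ι l)]
    [∀ l, Nonempty (ι l)]
    (r : L → ℕ) (f : ∀ l, ι l → 𝒳 l → (Fin (r l) → Bool))
    (huniv : TwoUniversal r f)
    (q : (∀ l, 𝒳 l) → ℝ) (hq : IsPMF q) :
    (∑ g : ∀ l, ι l, ∑ g' : ∀ l, ι l, ∑ x : ∀ l, 𝒳 l, ∑ x' : ∀ l, 𝒳 l,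
        (∏ l, (Fintype.card (ι l) : ℝ))⁻¹ * (∏ l, (Fintype.card (ι l) : ℝ))⁻¹
          * q x * q x' *
          (if g = g' ∧ (∀ l, f l (g l) (x l) = f l (g' l) (x' l)) then (1 : ℝ) else 0))
      ≤ (∏ l, (Fintype.card (ι l) : ℝ))⁻¹ *
          ∑ S : Finset L, (2 : ℝ) ^ (-(∑ i ∈ S, (r i : ℝ)) - minEnt q Sᶜ) :=
  statement13_general r f huniv q hq
end
end

section
/- (Leftover hash lemma for concatenated hash functions) With the setup above, for any value z of a correlated random variable Z, the variational distance between the joint distribution of (F_L(X_L), F_L) given Z=z and the product of uniform distributions satisfies V(p_{F_L(X_L),F_L | Z=z}, p_U ⊗ p_{U_𝓕}) ≤ sqrt( Σ_{∅≠S⊆L} 2^{r_S − H_∞(X_S | Z=z)} ). -/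
/-!
By Cauchy–Schwarz, the `L¹` distance of a distribution `P` on `N` points from uniform is at most
`√(N · Σ P² - 1)`. For `(F_L(X_L), F_L)` we have `N = 2^{r_L} |𝓕_L|`, and `|𝓕_L| · Σ P²` is the
probability that, for independent `x, x' ∼ p` and a uniform hash tuple, the hashes of `x` and `x'`
agree on every coordinate; given `x, x'`, two-universality bounds this by
`∏_{l : x_l ≠ x'_l} 2^{-r_l}`. Hence `N · Σ P² ≤ E[2^{r_A}]` for `A` the set of coordinates on
which `x` and `x'` agree. Since `2^{r_A} ≤ Σ_{S ⊆ A} 2^{r_S}`, this is at most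
`Σ_S 2^{r_S} P[X_S = X'_S]`, and `P[X_S = X'_S] ≤ max_a P[X_S = a] = 2^{-H_∞(X_S)}`; the term
`S = ∅` is exactly `1`.
-/

noncomputable section
open Finset
open scoped Classical BigOperators

lemma sum_sq_sum_ite_eq {X Y : Type*} [Fintype X] [Fintype Y] [DecidableEq Y] (π : X → Y)
    (p : X → ℝ) :
    ∑ y, (∑ x, if π x = y then p x else 0) ^ 2
      = ∑ x, ∑ x', if π x = π x' then p x * p x' else 0 := by
  simp_rw [sq, sum_mul_sum]
  rw [sum_comm]
  refine sum_congr rfl fun x _ => ?_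
  rw [sum_comm]
  refine sum_congr rfl fun x' _ => ?_
  simp [ite_mul, mul_ite, eq_comm]

lemma sq_sum_abs_sub_inv_card_le {α : Type*} [Fintype α] (P : α → ℝ) (hP : ∑ a, P a = 1) :
    (∑ a, |P a - (Fintype.card α : ℝ)⁻¹|) ^ 2 ≤ Fintype.card α * ∑ a, P a ^ 2 - 1 := by
  have : Nonempty α := by
    by_contra h
    simp [not_nonempty_iff.1 h] at hP
  have hn : (Fintype.card α : ℝ) ≠ 0 := by positivity
  calc _ ≤ (Fintype.card α : ℝ) * ∑ a, |P a - (Fintype.card α : ℝ)⁻¹| ^ 2 := by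
        simpa using sq_sum_le_card_mul_sum_sq (s := univ) (f := fun a => |P a - _|)
    _ = _ := by
        simp only [sq_abs, sub_sq, sum_add_distrib, sum_sub_distrib,
          ← sum_mul, ← mul_sum, hP, sum_const, card_univ, nsmul_eq_mul]
        field_simp
        ring

lemma IsPMF.sum_sq_le_iSup {Ω : Type} [Fintype Ω] {p : Ω → ℝ} (hp : IsPMF p) :
    ∑ ω, p ω ^ 2 ≤ ⨆ ω, p ω :=
  calc ∑ ω, p ω ^ 2 ≤ ∑ ω, (⨆ ω, p ω) * p ω := by
        refine sum_le_sum fun ω _ => ?_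
        rw [sq]
        exact mul_le_mul_of_nonneg_right (le_ciSup (Finite.bddAbove_range p) ω) (hp.1 ω)
    _ = ⨆ ω, p ω := by rw [← mul_sum, hp.2, mul_one]

lemma IsPMF.iSup_pos {Ω : Type} [Fintype Ω] {p : Ω → ℝ} (hp : IsPMF p) : 0 < ⨆ ω, p ω := by
  by_contra! h
  have : ∑ ω, p ω ≤ 0 :=
    sum_nonpos fun ω _ => (le_ciSup (Finite.bddAbove_range p) ω).trans h
  linarith [hp.2]

section Marginals

variable {L : Type} [Fintype L] [DecidableEq L] {𝒳 : L → Type} [∀ l, Fintype (𝒳 l)]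

lemma marg_eq_sum_ite (p : (∀ l, 𝒳 l) → ℝ) (T : Finset L) (a : ∀ i : T, 𝒳 i.1) :
    marg p T a = ∑ x, if (fun i : T => x i.1) = a then p x else 0 := by
  simp only [marg, funext_iff]

lemma isPMF_marg {p : (∀ l, 𝒳 l) → ℝ} (hp : IsPMF p) (T : Finset L) :
    IsPMF (marg p T) := by
  refine ⟨fun a => sum_nonneg fun x _ => ?_, ?_⟩
  · split_ifs
    exacts [hp.1 x, le_rfl]
  · simp_rw [marg_eq_sum_ite]
    rw [sum_comm]
    simpa using hp.2

lemma IsPMF.two_rpow_sum_sub_minEnt {p : (∀ l, 𝒳 l) → ℝ} (hp : IsPMF p) (r : L → ℕ)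
    (T : Finset L) :
    (2 : ℝ) ^ ((∑ i ∈ T, (r i : ℝ)) - minEnt p T)
      = (∏ i ∈ T, (2 : ℝ) ^ r i) * ⨆ a, marg p T a := by
  rw [sub_eq_add_neg, Real.rpow_add two_pos, minEnt, neg_neg,
    Real.rpow_logb two_pos (by norm_num) (isPMF_marg hp T).iSup_pos, ← Nat.cast_sum,
    Real.rpow_natCast, prod_pow_eq_pow_sum]

/-- `P[X_T = X'_T]` for independent `X, X' ∼ p`. -/
def collisionProb (p : (∀ l, 𝒳 l) → ℝ) (T : Finset L) : ℝ :=
  ∑ x, ∑ x', if ∀ i ∈ T, x i = x' i then p x * p x' else 0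

lemma collisionProb_eq_sum_marg_sq (p : (∀ l, 𝒳 l) → ℝ) (T : Finset L) :
    collisionProb p T = ∑ a, marg p T a ^ 2 := by
  simp only [marg_eq_sum_ite]
  rw [sum_sq_sum_ite_eq]
  simp only [collisionProb, funext_iff, Subtype.forall]

lemma IsPMF.collisionProb_empty {p : (∀ l, 𝒳 l) → ℝ} (hp : IsPMF p) :
    collisionProb p ∅ = 1 := by
  simp [collisionProb, ← sum_mul_sum, hp.2]

lemma IsPMF.collisionProb_le_iSup_marg {p : (∀ l, 𝒳 l) → ℝ} (hp : IsPMF p)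
    (T : Finset L) : collisionProb p T ≤ ⨆ a, marg p T a :=
  collisionProb_eq_sum_marg_sq p T ▸ (isPMF_marg hp T).sum_sq_le_iSup

lemma sum_mul_prod_agree_le_sum_collisionProb {p : (∀ l, 𝒳 l) → ℝ} (hp : ∀ x, 0 ≤ p x)
    {w : L → ℝ} (hw : ∀ l, 0 ≤ w l) :
    ∑ x, ∑ x', p x * p x' * ∏ l ∈ univ.filter (fun l => x l = x' l), w l
      ≤ ∑ T, (∏ l ∈ T, w l) * collisionProb p T := by
  calc _ ≤ ∑ x, ∑ x', ∑ T : Finset L,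
        if ∀ i ∈ T, x i = x' i then (∏ l ∈ T, w l) * (p x * p x') else 0 := by
        refine sum_le_sum fun x _ => sum_le_sum fun x' _ => ?_
        have hagree : ∀ i ∈ univ.filter (fun l => x l = x' l), x i = x' i :=
          fun i hi => (mem_filter.1 hi).2
        calc _ = if ∀ i ∈ univ.filter (fun l => x l = x' l), x i = x' i then
                (∏ l ∈ univ.filter (fun l => x l = x' l), w l) * (p x * p x') else 0 := by
              rw [if_pos hagree, mul_comm]
          _ ≤ _ := single_le_sum (f := fun T : Finset L =>
              if ∀ i ∈ T, x i = x' i then (∏ l ∈ T, w l) * (p x * p x') else 0) (fun T _ => by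
              split_ifs
              exacts [mul_nonneg (prod_nonneg fun l _ => hw l) (mul_nonneg (hp x) (hp x')),
                le_rfl]) (mem_univ _)
    _ = _ := by
        simp only [collisionProb, mul_sum, mul_ite, mul_zero]
        exact (sum_congr rfl fun x _ => sum_comm).trans sum_comm

lemma IsPMF.sum_prod_mul_collisionProb_sub_one_le {p : (∀ l, 𝒳 l) → ℝ} (hp : IsPMF p)
    (r : L → ℕ) :
    ∑ T, (∏ l ∈ T, (2 : ℝ) ^ r l) * collisionProb p T - 1
      ≤ ∑ S ∈ univ.filter (fun S : Finset L => S ≠ ∅),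
          (2 : ℝ) ^ ((∑ i ∈ S, (r i : ℝ)) - minEnt p S) := by
  rw [← add_sum_erase _ _ (mem_univ ∅), hp.collisionProb_empty, prod_empty, one_mul,
    add_sub_cancel_left, ← filter_ne']
  refine sum_le_sum fun T _ => ?_
  rw [hp.two_rpow_sum_sub_minEnt]
  gcongr
  exact hp.collisionProb_le_iSup_marg T

end Marginals

section TwoUniversal

variable {L : Type} {𝒳 ι : L → Type} [∀ l, Fintype (ι l)] {r : L → ℕ}
  {f : ∀ l, ι l → 𝒳 l → (Fin (r l) → Bool)}

lemma TwoUniversal.pow_mul_card_filter_div_le (huniv : TwoUniversal r f)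
    (l : L) (a a' : 𝒳 l) :
    2 ^ r l * (#(univ.filter fun i => f l i a = f l i a') : ℝ) / Fintype.card (ι l)
      ≤ if a = a' then 2 ^ r l else 1 := by
  rw [mul_div_assoc]
  split_ifs with h
  · exact mul_le_of_le_one_right (by positivity)
      (div_le_one_of_le₀ (by exact_mod_cast card_filter_le _ _) (by positivity))
  · calc _ ≤ (2 : ℝ) ^ r l * ((2 : ℝ) ^ r l)⁻¹ := by gcongr; exact huniv l a a' h
      _ = 1 := mul_inv_cancel₀ (by positivity)

end TwoUniversal

section Hashing

variable {L : Type} [Fintype L] [DecidableEq L] {𝒳 ι : L → Type} [∀ l, Fintype (𝒳 l)]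
  [∀ l, Fintype (ι l)] {r : L → ℕ}

/-- The joint law of `(F_L(X_L), F_L)` for `X_L ∼ p` and a uniformly random hash index. -/
def hashedPMF (f : ∀ l, ι l → 𝒳 l → (Fin (r l) → Bool)) (p : (∀ l, 𝒳 l) → ℝ)
    (kg : (∀ l, Fin (r l) → Bool) × (∀ l, ι l)) : ℝ :=
  (∏ l, (Fintype.card (ι l) : ℝ))⁻¹ * ∑ x, if ∀ l, f l (kg.2 l) (x l) = kg.1 l then p x else 0

lemma card_filter_forall_eq_prod {P : ∀ l, ι l → Prop} [∀ l, DecidablePred (P l)]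
    [DecidablePred fun g : ∀ l, ι l => ∀ l, P l (g l)] :
    #(univ.filter fun g : ∀ l, ι l => ∀ l, P l (g l)) = ∏ l, #(univ.filter (P l)) := by
  rw [← Fintype.card_piFinset]
  congr 1
  ext g
  simp [Fintype.mem_piFinset]

lemma sum_hashedPMF [∀ l, Nonempty (ι l)] (f : ∀ l, ι l → 𝒳 l → (Fin (r l) → Bool))
    (p : (∀ l, 𝒳 l) → ℝ) : ∑ kg, hashedPMF f p kg = ∑ x, p x := by
  have hG : (∏ l, (Fintype.card (ι l) : ℝ)) ≠ 0 := by positivity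
  have hfiber : ∀ g : ∀ l, ι l, ∑ k : ∀ l, Fin (r l) → Bool, hashedPMF f p (k, g)
      = (∏ l, (Fintype.card (ι l) : ℝ))⁻¹ * ∑ x, p x := by
    intro g
    simp only [hashedPMF, ← mul_sum, ← funext_iff]
    rw [sum_comm]
    simp
  rw [Fintype.sum_prod_type, sum_comm]
  simp [hfiber, Fintype.card_pi, hG]

lemma sum_hashedPMF_sq (f : ∀ l, ι l → 𝒳 l → (Fin (r l) → Bool)) (p : (∀ l, 𝒳 l) → ℝ) :
    ∑ kg, hashedPMF f p kg ^ 2 = (∏ l, (Fintype.card (ι l) : ℝ))⁻¹ ^ 2 *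
      ∑ x, ∑ x', p x * p x' *
        #(univ.filter fun g : ∀ l, ι l => ∀ l, f l (g l) (x l) = f l (g l) (x' l)) := by
  have hfiber : ∀ g : ∀ l, ι l,
      ∑ k : ∀ l, Fin (r l) → Bool, (∑ x, if ∀ l, f l (g l) (x l) = k l then p x else 0) ^ 2
        = ∑ x, ∑ x', if ∀ l, f l (g l) (x l) = f l (g l) (x' l) then p x * p x' else 0 := by
    intro g
    simp only [← funext_iff]
    exact sum_sq_sum_ite_eq _ p
  rw [Fintype.sum_prod_type, sum_comm]
  simp only [hashedPMF, mul_pow, ← mul_sum, hfiber]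
  congr 1
  rw [sum_comm]
  refine sum_congr rfl fun x _ => ?_
  rw [sum_comm]
  refine sum_congr rfl fun x' _ => ?_
  rw [sum_ite, sum_const_zero, add_zero, sum_const, nsmul_eq_mul, mul_comm]

lemma TwoUniversal.card_mul_sum_hashedPMF_sq_le [∀ l, Nonempty (ι l)]
    {f : ∀ l, ι l → 𝒳 l → (Fin (r l) → Bool)} (huniv : TwoUniversal r f)
    {p : (∀ l, 𝒳 l) → ℝ} (hp : ∀ x, 0 ≤ p x) :
    (Fintype.card ((∀ l, Fin (r l) → Bool) × (∀ l, ι l)) : ℝ) * ∑ kg, hashedPMF f p kg ^ 2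
      ≤ ∑ x, ∑ x', p x * p x' * ∏ l ∈ univ.filter (fun l => x l = x' l), (2 : ℝ) ^ r l := by
  have hG : (∏ l, (Fintype.card (ι l) : ℝ)) ≠ 0 := by positivity
  have hpair : ∀ x x' : ∀ l, 𝒳 l,
      (Fintype.card ((∀ l, Fin (r l) → Bool) × (∀ l, ι l)) : ℝ)
          * (∏ l, (Fintype.card (ι l) : ℝ))⁻¹ ^ 2
          * #(univ.filter fun g : ∀ l, ι l => ∀ l, f l (g l) (x l) = f l (g l) (x' l))
        = ∏ l, 2 ^ r l * (#(univ.filter fun i => f l i (x l) = f l i (x' l)) : ℝ)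
            / Fintype.card (ι l) := by
    intro x x'
    rw [card_filter_forall_eq_prod (P := fun l i => f l i (x l) = f l i (x' l))]
    simp only [Fintype.card_prod, Fintype.card_pi, Fintype.card_bool, prod_const, card_univ,
      Fintype.card_fin, Nat.cast_mul, Nat.cast_prod, Nat.cast_pow, Nat.cast_ofNat,
      prod_div_distrib, prod_mul_distrib]
    field_simp
  rw [sum_hashedPMF_sq, ← mul_assoc, mul_sum]
  refine sum_le_sum fun x _ => ?_
  rw [mul_sum]
  refine sum_le_sum fun x' _ => ?_
  rw [mul_left_comm, hpair, prod_filter]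
  exact mul_le_mul_of_nonneg_left
    (prod_le_prod (fun l _ => by positivity) fun l _ => huniv.pow_mul_card_filter_div_le l _ _)
    (mul_nonneg (hp x) (hp x'))

end Hashing

/-- leftover hash lemma for concatenated hash functions, conditioned on
`Z = z`: the variational distance of `(F_L(X_L), F_L)` given `Z = z` from uniform is at
most `sqrt(Σ_{∅≠S⊆L} 2^{r_S - H_∞(X_S|Z=z)})`. -/
theorem statement14 {L : Type} [Fintype L] [DecidableEq L]
    {𝒳 : L → Type} [∀ l, Fintype (𝒳 l)] {ι : L → Type} [∀ l, Fintype (ι l)]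
    [∀ l, Nonempty (ι l)] {𝒵 : Type} [Fintype 𝒵]
    (r : L → ℕ) (f : ∀ l, ι l → 𝒳 l → (Fin (r l) → Bool))
    (huniv : TwoUniversal r f)
    (q : ((∀ l, 𝒳 l) × 𝒵) → ℝ) (hq : IsPMF q)
    (z : 𝒵) (hz : 0 < ∑ x : ∀ l, 𝒳 l, q (x, z)) :
    (∑ k : ∀ l, Fin (r l) → Bool, ∑ g : ∀ l, ι l,
        |(∏ l, (Fintype.card (ι l) : ℝ))⁻¹ *
            (∑ x : ∀ l, 𝒳 l,
              if (∀ l, f l (g l) (x l) = k l)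
              then q (x, z) / (∑ x' : ∀ l, 𝒳 l, q (x', z)) else 0)
          - ((2 : ℝ) ^ (∑ l, r l))⁻¹ * (∏ l, (Fintype.card (ι l) : ℝ))⁻¹|)
      ≤ Real.sqrt (∑ S ∈ Finset.univ.filter (fun S : Finset L => S ≠ ∅),
          (2 : ℝ) ^ ((∑ i ∈ S, (r i : ℝ))
            - minEnt (fun x => q (x, z) / (∑ x' : ∀ l, 𝒳 l, q (x', z))) S)) := by
  set p : (∀ l, 𝒳 l) → ℝ := fun x => q (x, z) / ∑ x', q (x', z)
  have hp : IsPMF p := ⟨fun x => div_nonneg (hq.1 _) hz.le, by rw [← sum_div, div_self hz.ne']⟩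
  have huniform : ((2 : ℝ) ^ (∑ l, r l))⁻¹ * (∏ l, (Fintype.card (ι l) : ℝ))⁻¹
      = (Fintype.card ((∀ l, Fin (r l) → Bool) × (∀ l, ι l)) : ℝ)⁻¹ := by
    simp [Fintype.card_pi, prod_pow_eq_pow_sum, mul_comm]
  calc _ = ∑ kg, |hashedPMF f p kg
          - (Fintype.card ((∀ l, Fin (r l) → Bool) × (∀ l, ι l)) : ℝ)⁻¹| := by
        rw [huniform, Fintype.sum_prod_type]
        rfl
    _ ≤ √((Fintype.card ((∀ l, Fin (r l) → Bool) × (∀ l, ι l)) : ℝ)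
          * ∑ kg, hashedPMF f p kg ^ 2 - 1) :=
        Real.le_sqrt_of_sq_le (sq_sum_abs_sub_inv_card_le _ ((sum_hashedPMF f p).trans hp.2))
    _ ≤ √(∑ T, (∏ l ∈ T, (2 : ℝ) ^ r l) * collisionProb p T - 1) := by
        gcongr
        exact (huniv.card_mul_sum_hashedPMF_sq_le hp.1).trans
          (sum_mul_prod_agree_le_sum_collisionProb hp.1 fun l => by positivity)
    _ ≤ _ := Real.sqrt_le_sqrt (hp.sum_prod_mul_collisionProb_sub_one_le r)
end
end

section
/- With the same setup and averaging over Z, V(p_{F_L(X_L),F_L,Z}, p_U ⊗ p_{U_𝓕} ⊗ p_Z) ≤ sqrt( Σ_{∅≠S⊆L} 2^{r_S − H̃_∞(X_S | Z)} ), where H̃_∞(X|Z) = −log E_Z[max_x p_{X|Z}(x|Z)] is the average conditional min-entropy. -/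
noncomputable section
open Finset
open scoped Classical BigOperators

/-- Average conditional min-entropy (base 2):
`H̃_∞(X_S|Z) = -log₂ Σ_z max_a P[X_S = a, Z = z]`. -/
def avgMinEnt {L : Type} [Fintype L] [DecidableEq L] {𝒳 : L → Type} [∀ l, Fintype (𝒳 l)]
    {𝒵 : Type} [Fintype 𝒵] (q : ((∀ l, 𝒳 l) × 𝒵) → ℝ) (S : Finset L) : ℝ :=
  - Real.logb 2 (∑ z : 𝒵, ⨆ a : ∀ i : S, 𝒳 i.1,
      ∑ x : ∀ l, 𝒳 l, if (∀ i : S, x i.1 = a i) then q (x, z) else 0)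

/-!
For a fixed value `z`, Cauchy–Schwarz bounds the L¹ distance between the law of
`(F_G(X), G)` and the uniform one by the square root of `2^{r_L} |𝓕|` times their squared
L² distance, which is a variance. Expanding the square turns the expected collision
probability of the concatenated hash into a sum over pairs `x, x'`; applying
two-universality coordinatewise and multiplying out `∏_l ([x_l = x'_l] + 2^{-r_l})` splits it
into a sum over the sets `S` of coordinates on which `x` and `x'` agree, weighted by
`2^{-r_{L∖S}}`. The term `S = ∅` cancels against the uniform distribution, and the collision
probability of `X_S` is at most its largest point mass. A second Cauchy–Schwarz over `z`
(Jensen's inequality for the square root) then produces the average conditional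
min-entropies.
-/

theorem sum_abs_le_sqrt_card_mul_sum_sq {ι : Type*} (s : Finset ι) (f : ι → ℝ) :
    ∑ i ∈ s, |f i| ≤ √(#s * ∑ i ∈ s, f i ^ 2) := by
  refine Real.le_sqrt_of_sq_le ?_
  simpa only [sq_abs] using sq_sum_le_card_mul_sum_sq (s := s) (f := fun i => |f i|)

theorem two_pow_sum_mul_inv_two_pow_sum_compl {L : Type} [Fintype L] [DecidableEq L]
    (r : L → ℕ) (S : Finset L) :
    (2 : ℝ) ^ (∑ l, r l) * ((2 : ℝ) ^ ∑ l ∈ Sᶜ, r l)⁻¹ = 2 ^ ∑ l ∈ S, r l := by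
  rw [← Finset.sum_add_sum_compl S r, pow_add]
  field_simp

theorem card_hash_values {L : Type} [Fintype L] [DecidableEq L] (r : L → ℕ) :
    (Fintype.card (∀ l, Fin (r l) → Bool) : ℝ) = 2 ^ ∑ l, r l := by
  simp [Fintype.card_pi, Finset.prod_pow_eq_pow_sum]

theorem le_two_rpow_logb (s : ℝ) : s ≤ (2 : ℝ) ^ Real.logb 2 s := by
  rcases eq_or_ne s 0 with rfl | hs
  · positivity
  · rw [Real.rpow_logb_eq_abs two_pos (by norm_num) hs]
    exact le_abs_self s

theorem card_filter_forall_pi {L : Type} [Fintype L] [DecidableEq L] {β : L → Type}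
    [∀ l, Fintype (β l)]
    (P : ∀ l, β l → Prop) [∀ l, DecidablePred (P l)]
    [DecidablePred fun b : ∀ l, β l => ∀ l, P l (b l)] :
    #{b : ∀ l, β l | ∀ l, P l (b l)} = ∏ l, #{i | P l i} := by
  rw [← Fintype.card_piFinset]
  congr 1
  ext b
  simp [Fintype.mem_piFinset]

section Fibers

variable {α β : Type*} [Fintype α] [Fintype β]

theorem sum_fiber_mass (φ : α → β) (p : α → ℝ) :
    ∑ b, ∑ x, (if φ x = b then p x else 0) = ∑ x, p x := by
  rw [Finset.sum_comm]
  simp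

theorem sum_sq_fiber_mass (φ : α → β) (p : α → ℝ) :
    ∑ b, (∑ x, if φ x = b then p x else 0) ^ 2
      = ∑ x, ∑ x', if φ x = φ x' then p x * p x' else 0 := by
  simp_rw [sq, Finset.sum_mul_sum]
  rw [Finset.sum_comm]
  refine Finset.sum_congr rfl fun x _ => ?_
  rw [Finset.sum_comm]
  refine Finset.sum_congr rfl fun x' _ => ?_
  simp [ite_mul, mul_ite]

theorem sum_sq_fiber_mass_le (φ : α → β) {p : α → ℝ} (hp : ∀ x, 0 ≤ p x) :
    ∑ b, (∑ x, if φ x = b then p x else 0) ^ 2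
      ≤ (⨆ b, ∑ x, if φ x = b then p x else 0) * ∑ x, p x := by
  rw [← sum_fiber_mass φ p, Finset.mul_sum]
  refine Finset.sum_le_sum fun b _ => ?_
  rw [sq]
  exact mul_le_mul_of_nonneg_right
    (le_ciSup (f := fun b => ∑ x, if φ x = b then p x else 0) (Set.finite_range _).bddAbove b)
    (Finset.sum_nonneg fun x _ => ite_nonneg (hp x) le_rfl)

theorem sum_sq_sub_mean (m : β → ℝ) :
    ∑ b, (m b - (∑ b', m b') / Fintype.card β) ^ 2
      = ∑ b, m b ^ 2 - (∑ b, m b) ^ 2 / Fintype.card β := by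
  rcases isEmpty_or_nonempty β with _ | _
  · simp
  simp_rw [sub_sq, Finset.sum_add_distrib, Finset.sum_sub_distrib, ← Finset.sum_mul,
    ← Finset.mul_sum, Finset.sum_const, Finset.card_univ, nsmul_eq_mul]
  field_simp
  ring

end Fibers

section Hashing

variable {L : Type} {𝒳 ι : L → Type} [∀ l, Fintype (ι l)]
  {r : L → ℕ} {f : ∀ l, ι l → 𝒳 l → (Fin (r l) → Bool)}

theorem TwoUniversal.card_collision_le (huniv : TwoUniversal r f) (l : L) [Nonempty (ι l)]
    (x x' : 𝒳 l) :
    (#{i | f l i x = f l i x'} : ℝ)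
      ≤ Fintype.card (ι l) * ((if x = x' then 1 else 0) + ((2 : ℝ) ^ r l)⁻¹) := by
  by_cases h : x = x'
  · rw [if_pos h, mul_add, mul_one]
    exact le_add_of_le_of_nonneg (by exact_mod_cast Finset.card_filter_le _ _) (by positivity)
  · have := huniv l x x' h
    rw [div_le_iff₀ (by exact_mod_cast Fintype.card_pos)] at this
    rw [if_neg h, zero_add, mul_comm]
    exact this

theorem prod_boole_add_inv_two_pow [Fintype L] [DecidableEq L] {β : L → Type} (x x' : ∀ l, β l) :
    ∏ l, ((if x l = x' l then 1 else 0) + ((2 : ℝ) ^ r l)⁻¹)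
      = ∑ S : Finset L, (if ∀ l ∈ S, x l = x' l then 1 else 0) * ((2 : ℝ) ^ ∑ l ∈ Sᶜ, r l)⁻¹ := by
  rw [Fintype.prod_add]
  refine Finset.sum_congr rfl fun S _ => ?_
  rw [Finset.prod_boole, Finset.prod_inv_distrib, Finset.prod_pow_eq_pow_sum]
  congr

theorem TwoUniversal.card_concat_collision_le [Fintype L] [DecidableEq L] [∀ l, Nonempty (ι l)]
    (huniv : TwoUniversal r f) (x x' : ∀ l, 𝒳 l) :
    (#{g : ∀ l, ι l | ∀ l, f l (g l) (x l) = f l (g l) (x' l)} : ℝ)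
      ≤ (∏ l, (Fintype.card (ι l) : ℝ))
        * ∑ S : Finset L, (if ∀ l ∈ S, x l = x' l then 1 else 0) * ((2 : ℝ) ^ ∑ l ∈ Sᶜ, r l)⁻¹ := by
  rw [card_filter_forall_pi (fun l i => f l i (x l) = f l i (x' l)), Nat.cast_prod,
    ← prod_boole_add_inv_two_pow, ← Finset.prod_mul_distrib]
  exact Finset.prod_le_prod (fun l _ => by positivity)
    (fun l _ => huniv.card_collision_le l (x l) (x' l))

end Hashing

section Collision

variable {L : Type} [Fintype L] [DecidableEq L] {𝒳 ι : L → Type} [∀ l, Fintype (𝒳 l)]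
  {r : L → ℕ} {f : ∀ l, ι l → 𝒳 l → (Fin (r l) → Bool)}

theorem sum_sq_marg (p : (∀ l, 𝒳 l) → ℝ) (S : Finset L) :
    ∑ a : ∀ i : S, 𝒳 i.1, marg p S a ^ 2
      = ∑ x, ∑ x', if ∀ l ∈ S, x l = x' l then p x * p x' else 0 := by
  convert sum_sq_fiber_mass (fun x (i : S) => x i.1) p using 6 <;>
    simp only [marg, funext_iff, Subtype.forall]

theorem sum_sq_marg_empty (p : (∀ l, 𝒳 l) → ℝ) :
    ∑ a : ∀ i : (∅ : Finset L), 𝒳 i.1, marg p ∅ a ^ 2 = (∑ x, p x) ^ 2 := by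
  rw [sum_sq_marg]
  simp [sq, Finset.sum_mul_sum]

theorem sum_sq_marg_le {p : (∀ l, 𝒳 l) → ℝ} (hp : ∀ x, 0 ≤ p x) (S : Finset L) :
    ∑ a : ∀ i : S, 𝒳 i.1, marg p S a ^ 2 ≤ (⨆ a, marg p S a) * ∑ x, p x := by
  convert sum_sq_fiber_mass_le (fun x (i : S) => x i.1) hp using 5 <;>
    simp only [marg, funext_iff]

def hashMass (f : ∀ l, ι l → 𝒳 l → (Fin (r l) → Bool)) (p : (∀ l, 𝒳 l) → ℝ) (g : ∀ l, ι l)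
    (k : ∀ l, Fin (r l) → Bool) : ℝ :=
  ∑ x, if ∀ l, f l (g l) (x l) = k l then p x else 0

theorem sum_hash_mass (p : (∀ l, 𝒳 l) → ℝ) (g : ∀ l, ι l) :
    ∑ k, hashMass f p g k = ∑ x, p x := by
  convert sum_fiber_mass (fun x l => f l (g l) (x l)) p using 4
  simp only [hashMass, funext_iff]

theorem sum_sq_hash_mass (p : (∀ l, 𝒳 l) → ℝ) (g : ∀ l, ι l) :
    ∑ k, hashMass f p g k ^ 2
      = ∑ x, ∑ x', if ∀ l, f l (g l) (x l) = f l (g l) (x' l) then p x * p x' else 0 := by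
  convert sum_sq_fiber_mass (fun x l => f l (g l) (x l)) p using 6 <;>
    simp only [hashMass, funext_iff]

theorem TwoUniversal.sum_sq_hash_mass_le [∀ l, Fintype (ι l)] [∀ l, Nonempty (ι l)]
    (huniv : TwoUniversal r f) {p : (∀ l, 𝒳 l) → ℝ} (hp : ∀ x, 0 ≤ p x) :
    ∑ g, ∑ k, hashMass f p g k ^ 2
      ≤ (∏ l, (Fintype.card (ι l) : ℝ))
        * ∑ S : Finset L, ((2 : ℝ) ^ ∑ l ∈ Sᶜ, r l)⁻¹ * ∑ a : ∀ i : S, 𝒳 i.1, marg p S a ^ 2 := by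
  calc _ = ∑ x, ∑ x', (#{g : ∀ l, ι l | ∀ l, f l (g l) (x l) = f l (g l) (x' l)} : ℝ)
          * (p x * p x') := by
        simp only [sum_sq_hash_mass]
        rw [Finset.sum_comm]
        refine Finset.sum_congr rfl fun x _ => ?_
        rw [Finset.sum_comm]
        simp [Finset.sum_ite]
    _ ≤ ∑ x, ∑ x', ((∏ l, (Fintype.card (ι l) : ℝ)) * ∑ S : Finset L,
          (if ∀ l ∈ S, x l = x' l then 1 else 0) * ((2 : ℝ) ^ ∑ l ∈ Sᶜ, r l)⁻¹) * (p x * p x') :=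
        Finset.sum_le_sum fun x _ => Finset.sum_le_sum fun x' _ =>
          mul_le_mul_of_nonneg_right (huniv.card_concat_collision_le x x')
            (mul_nonneg (hp x) (hp x'))
    _ = ∑ x, ∑ x', ∑ S : Finset L, (∏ l, (Fintype.card (ι l) : ℝ)) *
          (((2 : ℝ) ^ ∑ l ∈ Sᶜ, r l)⁻¹ * if ∀ l ∈ S, x l = x' l then p x * p x' else 0) := by
        simp only [Finset.mul_sum, Finset.sum_mul]
        refine Finset.sum_congr rfl fun x _ => Finset.sum_congr rfl fun x' _ =>
          Finset.sum_congr rfl fun S _ => ?_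
        split_ifs <;> ring
    _ = _ := by
        simp only [sum_sq_marg, Finset.mul_sum]
        exact (Finset.sum_congr rfl fun x _ => Finset.sum_comm).trans Finset.sum_comm

end Collision

section LeftoverHash

variable {L : Type} [Fintype L] [DecidableEq L] {𝒳 ι : L → Type} [∀ l, Fintype (𝒳 l)]
  [∀ l, Fintype (ι l)] [∀ l, Nonempty (ι l)] {r : L → ℕ}
  {f : ∀ l, ι l → 𝒳 l → (Fin (r l) → Bool)}

theorem TwoUniversal.sum_sq_hash_mass_sub_le (huniv : TwoUniversal r f)
    {p : (∀ l, 𝒳 l) → ℝ} (hp : ∀ x, 0 ≤ p x) :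
    ∑ g, ∑ k, (hashMass f p g k - (∑ x, p x) / 2 ^ ∑ l, r l) ^ 2
      ≤ (∏ l, (Fintype.card (ι l) : ℝ)) * ∑ S ∈ univ.filter (fun S : Finset L => S ≠ ∅),
          ((2 : ℝ) ^ ∑ l ∈ Sᶜ, r l)⁻¹ * ∑ a : ∀ i : S, 𝒳 i.1, marg p S a ^ 2 := by
  have hvar : ∀ g, ∑ k, (hashMass f p g k - (∑ x, p x) / 2 ^ ∑ l, r l) ^ 2
      = ∑ k, hashMass f p g k ^ 2 - (∑ x, p x) ^ 2 / 2 ^ ∑ l, r l := fun g => by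
    rw [← card_hash_values, ← sum_hash_mass p g]
    exact sum_sq_sub_mean _
  have hcoll := huniv.sum_sq_hash_mass_le hp
  rw [← Finset.add_sum_erase (s := (univ : Finset (Finset L))) _ (Finset.mem_univ ∅),
    sum_sq_marg_empty, Finset.compl_empty, inv_mul_eq_div, mul_add] at hcoll
  simp only [hvar, Finset.sum_sub_distrib, Finset.sum_const, Finset.card_univ, nsmul_eq_mul,
    Fintype.card_pi, Nat.cast_prod, Finset.filter_ne']
  linarith

theorem TwoUniversal.sum_abs_hash_mass_sub_le (huniv : TwoUniversal r f)
    {p : (∀ l, 𝒳 l) → ℝ} (hp : ∀ x, 0 ≤ p x) :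
    ∑ k, ∑ g, |(∏ l, (Fintype.card (ι l) : ℝ))⁻¹ * hashMass f p g k
        - ((2 : ℝ) ^ ∑ l, r l)⁻¹ * (∏ l, (Fintype.card (ι l) : ℝ))⁻¹ * ∑ x, p x|
      ≤ √((∑ x, p x) * ∑ S ∈ univ.filter (fun S : Finset L => S ≠ ∅),
          2 ^ (∑ i ∈ S, r i) * ⨆ a, marg p S a) := by
  set N := ∏ l, (Fintype.card (ι l) : ℝ)
  set M := (2 : ℝ) ^ ∑ l, r l
  set Q := ∑ x, p x
  have hN : 0 < N := Finset.prod_pos fun l _ => by exact_mod_cast Fintype.card_pos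
  have hcard : (Fintype.card ((∀ l, Fin (r l) → Bool) × (∀ l, ι l)) : ℝ) = M * N := by
    rw [Fintype.card_prod, Nat.cast_mul, card_hash_values, Fintype.card_pi, Nat.cast_prod]
  rw [← Fintype.sum_prod_type']
  refine (sum_abs_le_sqrt_card_mul_sum_sq _ _).trans (Real.sqrt_le_sqrt ?_)
  calc _ = M * N⁻¹ * ∑ g, ∑ k, (hashMass f p g k - Q / M) ^ 2 := by
        rw [Finset.card_univ, hcard, Fintype.sum_prod_type,
          Finset.sum_comm (s := (univ : Finset (∀ l, Fin (r l) → Bool)))]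
        simp only [Finset.mul_sum]
        refine Finset.sum_congr rfl fun g _ => Finset.sum_congr rfl fun k _ => ?_
        field_simp
    _ ≤ M * N⁻¹ * (N * ∑ S ∈ univ.filter (fun S : Finset L => S ≠ ∅),
          ((2 : ℝ) ^ ∑ l ∈ Sᶜ, r l)⁻¹ * ∑ a : ∀ i : S, 𝒳 i.1, marg p S a ^ 2) := by
        gcongr
        exact huniv.sum_sq_hash_mass_sub_le hp
    _ = ∑ S ∈ univ.filter (fun S : Finset L => S ≠ ∅),
          M * ((2 : ℝ) ^ ∑ l ∈ Sᶜ, r l)⁻¹ * ∑ a : ∀ i : S, 𝒳 i.1, marg p S a ^ 2 := by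
        rw [mul_assoc, inv_mul_cancel_left₀ hN.ne', Finset.mul_sum]
        simp only [mul_assoc]
    _ ≤ ∑ S ∈ univ.filter (fun S : Finset L => S ≠ ∅),
          2 ^ (∑ i ∈ S, r i) * ((⨆ a, marg p S a) * Q) := by
        gcongr with S
        rw [two_pow_sum_mul_inv_two_pow_sum_compl]
        exact sum_sq_marg_le hp S
    _ = _ := by
        rw [Finset.mul_sum]
        exact Finset.sum_congr rfl fun S _ => by ring

end LeftoverHash

theorem two_pow_mul_sum_iSup_marg_le_rpow_avgMinEnt {L : Type} [Fintype L] [DecidableEq L]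
    {𝒳 : L → Type} [∀ l, Fintype (𝒳 l)] {𝒵 : Type} [Fintype 𝒵] (r : L → ℕ)
    (q : ((∀ l, 𝒳 l) × 𝒵) → ℝ) (S : Finset L) :
    2 ^ (∑ i ∈ S, r i) * ∑ z, ⨆ a, marg (fun x => q (x, z)) S a
      ≤ (2 : ℝ) ^ ((∑ i ∈ S, (r i : ℝ)) - avgMinEnt q S) := by
  rw [avgMinEnt, sub_neg_eq_add, Real.rpow_add two_pos, ← Nat.cast_sum, Real.rpow_natCast]
  exact mul_le_mul_of_nonneg_left (le_two_rpow_logb _) (by positivity)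

/-- leftover hash lemma for concatenated hash functions, averaged over `Z`:
`V(p_{F_L(X_L),F_L,Z}, p_U ⊗ p_{U_𝓕} ⊗ p_Z) ≤ sqrt(Σ_{∅≠S⊆L} 2^{r_S - H̃_∞(X_S|Z)})`. -/
theorem statement15 {L : Type} [Fintype L] [DecidableEq L]
    {𝒳 : L → Type} [∀ l, Fintype (𝒳 l)] {ι : L → Type} [∀ l, Fintype (ι l)]
    [∀ l, Nonempty (ι l)] {𝒵 : Type} [Fintype 𝒵]
    (r : L → ℕ) (f : ∀ l, ι l → 𝒳 l → (Fin (r l) → Bool))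
    (huniv : TwoUniversal r f)
    (q : ((∀ l, 𝒳 l) × 𝒵) → ℝ) (hq : IsPMF q) :
    (∑ k : ∀ l, Fin (r l) → Bool, ∑ g : ∀ l, ι l, ∑ z : 𝒵,
        |(∏ l, (Fintype.card (ι l) : ℝ))⁻¹ *
            (∑ x : ∀ l, 𝒳 l,
              if (∀ l, f l (g l) (x l) = k l) then q (x, z) else 0)
          - ((2 : ℝ) ^ (∑ l, r l))⁻¹ * (∏ l, (Fintype.card (ι l) : ℝ))⁻¹
              * (∑ x : ∀ l, 𝒳 l, q (x, z))|)
      ≤ Real.sqrt (∑ S ∈ Finset.univ.filter (fun S : Finset L => S ≠ ∅),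
          (2 : ℝ) ^ ((∑ i ∈ S, (r i : ℝ)) - avgMinEnt q S)) := by
  obtain ⟨hq0, hq1⟩ := hq
  set C : 𝒵 → ℝ := fun z => ∑ S ∈ univ.filter (fun S : Finset L => S ≠ ∅),
    2 ^ (∑ i ∈ S, r i) * ⨆ a, marg (fun x => q (x, z)) S a
  have hZ : ∑ z, ∑ x, q (x, z) = 1 := by
    rw [Finset.sum_comm, ← Fintype.sum_prod_type']
    exact hq1
  have hC : ∀ z, 0 ≤ C z := fun z => Finset.sum_nonneg fun S _ => mul_nonneg (by positivity)
    (Real.iSup_nonneg fun a => Finset.sum_nonneg fun x _ => ite_nonneg (hq0 (x, z)) le_rfl)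
  calc _ = ∑ z, ∑ k, ∑ g, |(∏ l, (Fintype.card (ι l) : ℝ))⁻¹ * hashMass f (fun x => q (x, z)) g k
        - ((2 : ℝ) ^ ∑ l, r l)⁻¹ * (∏ l, (Fintype.card (ι l) : ℝ))⁻¹ * ∑ x, q (x, z)| :=
        (Finset.sum_congr rfl fun k _ => Finset.sum_comm).trans Finset.sum_comm
    _ ≤ ∑ z, √(∑ x, q (x, z)) * √(C z) := by
        gcongr with z
        rw [← Real.sqrt_mul (Finset.sum_nonneg fun x _ => hq0 (x, z))]
        exact huniv.sum_abs_hash_mass_sub_le fun x => hq0 (x, z)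
    _ ≤ √(∑ z, ∑ x, q (x, z)) * √(∑ z, C z) :=
        Real.sum_sqrt_mul_sqrt_le _ (fun z => Finset.sum_nonneg fun x _ => hq0 (x, z)) hC
    _ ≤ _ := by
        rw [hZ, Real.sqrt_one, one_mul]
        refine Real.sqrt_le_sqrt ?_
        simp only [C]
        rw [Finset.sum_comm]
        gcongr with S
        rw [← Finset.mul_sum]
        exact two_pow_mul_sum_iSup_marg_le_rpow_avgMinEnt r q S
end
end
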